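/- arXiv:gr-qc/9612051 — 3 statements merged into one kernel-verified Lean document; each statement's English description precedes it below -/
import Mathlib

section
/- Fix n ≥ 1 and a smooth H : ℝ^n × ℝ^n → ℝ whose Hamiltonian vector field X_H(q,p) = (∂H/∂p(q,p), −∂H/∂q(q,p)) has a global C¹ flow Φ : ℝ × (ℝ^n × ℝ^n) → ℝ^n × ℝ^n with Φ(0,z) = z and ∂ₜΦ(t,z) = X_H(Φ(t,z)). Let c : I → ℝ × ℝ × ℝ^n × ℝ^n, c(s) = (T(s), P(s), q(s), p(s)), be a C¹ curve on an interval I containing 0 with c(s) ∈ Γ and c'(s) ∈ L_{c(s)} for all s. Then the P-component is constant, P(s) = P(0) for all s, and the curve is a reparametrized flow line: (q(s), p(s)) = Φ(T(s) − T(0), (q(0), p(0))) for all s ∈ I. (Consequently each c-orbit intersects the surface Γ_t = {x ∈ Γ : T(x) = t} in at most one point, so the time levels Γ_t are transversal surfaces.) -/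
noncomputable section

/-- The extended phase space `ℝ × ℝ × ℝ^n × ℝ^n` with points `(T, P, q, p)`. -/
abbrev ExtPhase (n : ℕ) := ℝ × ℝ × (Fin n → ℝ) × (Fin n → ℝ)

/-- The phase space `ℝ^n × ℝ^n` with points `(q, p)`. -/
abbrev Phase (n : ℕ) := (Fin n → ℝ) × (Fin n → ℝ)

/-- The standard symplectic bilinear form
`Ω̃((T,P,q,p),(T',P',q',p')) = P T' − T P' + Σ_k (p_k q'_k − q_k p'_k)`. -/
def OmTilde {n : ℕ} (v w : ExtPhase n) : ℝ :=
  v.2.1 * w.1 - v.1 * w.2.1 + ∑ k, (v.2.2.2 k * w.2.2.1 k - v.2.2.1 k * w.2.2.2 k)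

/-- The constraint function `C(T,P,q,p) = P + H(q,p)`. -/
def Cst {n : ℕ} (H : Phase n → ℝ) (v : ExtPhase n) : ℝ :=
  v.2.1 + H (v.2.2.1, v.2.2.2)

/-- The Hamiltonian vector field `X_H(q,p) = (∂H/∂p(q,p), −∂H/∂q(q,p))`. -/
def XH {n : ℕ} (H : Phase n → ℝ) (z : Phase n) : Phase n :=
  (fun k => fderiv ℝ H z (0, Pi.single k 1),
   fun k => -fderiv ℝ H z (Pi.single k 1, 0))

open Set

section Aux

variable {n : ℕ} {H : Phase n → ℝ}

/-- `X_H` is `C¹` when `H` is smooth. -/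
lemma contDiff_XH (hH : ContDiff ℝ (⊤ : ℕ∞) H) : ContDiff ℝ 1 (XH H) := by
  have hd : ContDiff ℝ 1 (fderiv ℝ H) := hH.fderiv_right (WithTop.coe_le_coe.2 le_top)
  exact ContDiff.prodMk
    (contDiff_pi.2 fun k => hd.clm_apply contDiff_const)
    (contDiff_pi.2 fun k => (hd.clm_apply contDiff_const).neg)

/-- First projection `v ↦ v.2.1` as a continuous linear map. -/
def πP (n : ℕ) : ExtPhase n →L[ℝ] ℝ :=
  (ContinuousLinearMap.fst ℝ ℝ (Phase n)).comp (ContinuousLinearMap.snd ℝ ℝ (ℝ × Phase n))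

/-- Projection `v ↦ v.2.2` as a continuous linear map. -/
def πZ (n : ℕ) : ExtPhase n →L[ℝ] Phase n :=
  (ContinuousLinearMap.snd ℝ ℝ (Phase n)).comp (ContinuousLinearMap.snd ℝ ℝ (ℝ × Phase n))

/-- Projection `v ↦ v.1` as a continuous linear map. -/
def πT (n : ℕ) : ExtPhase n →L[ℝ] ℝ := ContinuousLinearMap.fst ℝ ℝ (ℝ × Phase n)

lemma cst_hasFDerivAt (hH : ContDiff ℝ (⊤ : ℕ∞) H) (x : ExtPhase n) :
    HasFDerivAt (Cst H) (πP n + (fderiv ℝ H x.2.2).comp (πZ n)) x := by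
  have h1 : HasFDerivAt (fun v : ExtPhase n => v.2.1) (πP n) x := (πP n).hasFDerivAt
  have h2 : HasFDerivAt (fun v : ExtPhase n => H v.2.2)
      ((fderiv ℝ H x.2.2).comp (πZ n)) x :=
    ((hH.differentiable (by simp) x.2.2).hasFDerivAt).comp x (πZ n).hasFDerivAt
  exact h1.add h2

lemma fderiv_cst_apply (hH : ContDiff ℝ (⊤ : ℕ∞) H) (x w : ExtPhase n) :
    fderiv ℝ (Cst H) x w = w.2.1 + fderiv ℝ H x.2.2 w.2.2 := by
  rw [(cst_hasFDerivAt hH x).fderiv]; rfl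

/-- A function with zero derivative on an order-connected set is constant there. -/
lemma eq_const_of_hasDerivAt_zero {E : Type*} [NormedAddCommGroup E] [NormedSpace ℝ E]
    {I : Set ℝ} (hI : I.OrdConnected) {f : ℝ → E} (hf : ∀ s ∈ I, HasDerivAt f (0 : E) s)
    {a b : ℝ} (ha : a ∈ I) (hb : b ∈ I) : f b = f a := by
  have hsub : uIcc a b ⊆ I := hI.uIcc_subset ha hb
  have h := (convex_uIcc a b).norm_image_sub_le_of_norm_hasDerivWithin_le
    (f' := fun _ => (0 : E)) (C := 0)
    (fun x hx => (hf x (hsub hx)).hasDerivWithinAt)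
    (fun x _ => by simp) (left_mem_uIcc) (right_mem_uIcc)
  rw [zero_mul] at h
  have := norm_sub_eq_zero_iff.1 (le_antisymm h (norm_nonneg _))
  exact this

variable {Φ : ℝ × Phase n → Phase n}

/-- The group law for the flow, from uniqueness of ODE solutions. -/
lemma flow_add (hH : ContDiff ℝ (⊤ : ℕ∞) H) (hΦreg : ContDiff ℝ 1 Φ)
    (hΦ0 : ∀ z : Phase n, Φ (0, z) = z)
    (hΦ' : ∀ (t : ℝ) (z : Phase n),
      HasDerivAt (fun s => Φ (s, z)) (XH H (Φ (t, z))) t)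
    (a b : ℝ) (x : Phase n) : Φ (a + b, x) = Φ (a, Φ (b, x)) := by
  set f : ℝ → Phase n := fun t => Φ (t + b, x) with hf
  set g : ℝ → Phase n := fun t => Φ (t, Φ (b, x)) with hg
  have hfc : Continuous f := hΦreg.continuous.comp (by fun_prop)
  have hgc : Continuous g := hΦreg.continuous.comp (by fun_prop)
  set B : ℝ := |a| + 1 with hB
  have hBpos : (0 : ℝ) < B := by rw [hB]; positivity
  set A : ℝ := -B with hA
  obtain ⟨C1, hC1⟩ := (isCompact_Icc (a := A) (b := B)).exists_bound_of_continuousOn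
    hfc.continuousOn
  obtain ⟨C2, hC2⟩ := (isCompact_Icc (a := A) (b := B)).exists_bound_of_continuousOn
    hgc.continuousOn
  set R : ℝ := max C1 C2 with hR
  set Kc : Set (Phase n) := Metric.closedBall 0 R with hKc
  -- Lipschitz bound for XH on Kc
  have hX1 : ContDiff ℝ 1 (XH H) := contDiff_XH hH
  have hXd : Continuous (fderiv ℝ (XH H)) := by
    have : ContDiff ℝ 0 (fderiv ℝ (XH H)) := hX1.fderiv_right (by norm_num)
    exact this.continuous
  obtain ⟨L, hL⟩ := (isCompact_closedBall (0 : Phase n) R).exists_bound_of_continuousOn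
    hXd.continuousOn
  have hlip : LipschitzOnWith L.toNNReal (XH H) Kc := by
    apply (convex_closedBall _ _).lipschitzOnWith_of_nnnorm_fderiv_le
      (fun x _ => (hX1.differentiable one_ne_zero).differentiableAt)
    intro x hx
    have h1 : ‖fderiv ℝ (XH H) x‖ ≤ L := hL x hx
    rw [← NNReal.coe_le_coe, coe_nnnorm, Real.coe_toNNReal']
    exact le_max_of_le_left h1
  have hmem : ∀ t ∈ Ioo A B, f t ∈ Kc ∧ g t ∈ Kc := by
    intro t ht
    constructor
    · have h1 : ‖f t‖ ≤ R := (hC1 t (Ioo_subset_Icc_self ht)).trans (le_max_left _ _)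
      simpa only [hKc, Metric.mem_closedBall, dist_zero_right] using h1
    · have h1 : ‖g t‖ ≤ R := (hC2 t (Ioo_subset_Icc_self ht)).trans (le_max_right _ _)
      simpa only [hKc, Metric.mem_closedBall, dist_zero_right] using h1
  have hf' : ∀ t, HasDerivAt f (XH H (f t)) t := by
    intro t
    have h1 := hΦ' (t + b) x
    have h2 : HasDerivAt (fun t : ℝ => t + b) 1 t := (hasDerivAt_id t).add_const b
    have h3 := h1.scomp t h2
    rw [one_smul] at h3
    exact h3
  have hg' : ∀ t, HasDerivAt g (XH H (g t)) t := fun t => hΦ' t (Φ (b, x))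
  have ht0 : (0 : ℝ) ∈ Ioo A B := by
    rw [hA]; exact ⟨by linarith, hBpos⟩
  have heq0 : f 0 = g 0 := by simp [hf, hg, hΦ0]
  have := ODE_solution_unique_of_mem_Icc (v := fun _ y => XH H y) (s := fun _ => Kc)
    (fun _ _ => hlip) ht0 hfc.continuousOn
    (fun t _ => hf' t) (fun t ht => (hmem t ht).1)
    hgc.continuousOn (fun t _ => hg' t) (fun t ht => (hmem t ht).2) heq0
  have ha : a ∈ Icc A B := by
    rw [hA, hB]
    exact ⟨by linarith [neg_abs_le a], by linarith [le_abs_self a]⟩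
  exact this ha

/-- The partial derivative of `Φ` in the time direction. -/
lemma fderiv_flow_time (hΦreg : ContDiff ℝ 1 Φ)
    (hΦ' : ∀ (t : ℝ) (z : Phase n),
      HasDerivAt (fun s => Φ (s, z)) (XH H (Φ (t, z))) t)
    (t : ℝ) (z : Phase n) :
    fderiv ℝ Φ (t, z) ((1 : ℝ), (0 : Phase n)) = XH H (Φ (t, z)) := by
  have hdiff : DifferentiableAt ℝ Φ (t, z) := (hΦreg.differentiable one_ne_zero) _
  have hin : HasDerivAt (fun s : ℝ => (s, z)) ((1 : ℝ), (0 : Phase n)) t :=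
    HasDerivAt.prodMk (hasDerivAt_id t) (hasDerivAt_const t z)
  have h1 : HasDerivAt (fun s => Φ (s, z))
      (fderiv ℝ Φ (t, z) ((1 : ℝ), (0 : Phase n))) t :=
    hdiff.hasFDerivAt.comp_hasDerivAt t hin
  exact h1.unique (hΦ' t z)

/-- The flow derivative intertwines `X_H`. -/
lemma fderiv_flow_XH (hH : ContDiff ℝ (⊤ : ℕ∞) H) (hΦreg : ContDiff ℝ 1 Φ)
    (hΦ0 : ∀ z : Phase n, Φ (0, z) = z)
    (hΦ' : ∀ (t : ℝ) (z : Phase n),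
      HasDerivAt (fun s => Φ (s, z)) (XH H (Φ (t, z))) t)
    (t : ℝ) (x : Phase n) :
    fderiv ℝ Φ (t, x) ((0 : ℝ), XH H x) = XH H (Φ (t, x)) := by
  have hdiff : DifferentiableAt ℝ Φ (t, x) := (hΦreg.differentiable one_ne_zero) _
  have hin : HasDerivAt (fun τ : ℝ => ((t : ℝ), Φ (τ, x))) ((0 : ℝ), XH H x) 0 := by
    have := HasDerivAt.prodMk (hasDerivAt_const (0 : ℝ) t) (hΦ' 0 x)
    rwa [hΦ0 x] at this
  have hF : HasDerivAt (fun τ => Φ (t, Φ (τ, x)))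
      (fderiv ℝ Φ (t, x) ((0 : ℝ), XH H x)) 0 := by
    have hd2 : HasFDerivAt Φ (fderiv ℝ Φ (t, x)) ((t : ℝ), Φ ((0 : ℝ), x)) := by
      rw [hΦ0 x]; exact hdiff.hasFDerivAt
    exact hd2.comp_hasDerivAt 0 hin
  have hG : HasDerivAt (fun τ : ℝ => Φ (t + τ, x)) (XH H (Φ (t + 0, x))) 0 := by
    have h1 := hΦ' (t + 0) x
    have h2 : HasDerivAt (fun τ : ℝ => t + τ) 1 0 := (hasDerivAt_id 0).const_add t
    have h3 := h1.scomp 0 h2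
    rw [one_smul] at h3
    exact h3
  have heqfun : (fun τ => Φ (t, Φ (τ, x))) = fun τ : ℝ => Φ (t + τ, x) :=
    funext fun τ => (flow_add hH hΦreg hΦ0 hΦ' t τ x).symm
  rw [heqfun] at hF
  have := hF.unique hG
  rw [this, add_zero]

end Aux

/-- For the parametrized nonrelativistic system with smooth `H`
whose Hamiltonian vector field has a global C¹ flow `Φ`, every C¹ curve in `Γ`
with velocities in the longitudinal spaces has constant `P`-component and is a
reparametrized flow line: `(q(s),p(s)) = Φ(T(s) − T(0), (q(0),p(0)))`. -/
theorem longitudinal_curve_is_reparametrized_flow_line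
    (n : ℕ) (hn : 1 ≤ n) (H : Phase n → ℝ) (hH : ContDiff ℝ (⊤ : ℕ∞) H)
    (Φ : ℝ × Phase n → Phase n) (hΦreg : ContDiff ℝ 1 Φ)
    (hΦ0 : ∀ z : Phase n, Φ (0, z) = z)
    (hΦ' : ∀ (t : ℝ) (z : Phase n),
      HasDerivAt (fun s => Φ (s, z)) (XH H (Φ (t, z))) t)
    (I : Set ℝ) (hI : I.OrdConnected) (h0 : (0 : ℝ) ∈ I)
    (c c' : ℝ → ExtPhase n)
    (hderiv : ∀ s ∈ I, HasDerivAt c (c' s) s)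
    (hΓ : ∀ s ∈ I, Cst H (c s) = 0)
    (hL : ∀ s ∈ I, fderiv ℝ (Cst H) (c s) (c' s) = 0 ∧
      ∀ w : ExtPhase n, fderiv ℝ (Cst H) (c s) w = 0 → OmTilde (c' s) w = 0) :
    ∀ s ∈ I,
      (c s).2.1 = (c 0).2.1 ∧
      ((c s).2.2.1, (c s).2.2.2) =
        Φ ((c s).1 - (c 0).1, ((c 0).2.2.1, (c 0).2.2.2)) := by
  -- Step 1: extract componentwise information about the velocity
  have key : ∀ u ∈ I, (c' u).2.1 = 0 ∧
      (c' u).2.2 = (c' u).1 • XH H ((c u).2.2) := by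
    intro u hu
    set v : ExtPhase n := c' u with hv
    set D : Phase n →L[ℝ] ℝ := fderiv ℝ H ((c u).2.2) with hD
    have hOm := (hL u hu).2
    -- test vector (1,0,0,0)
    have hP : v.2.1 = 0 := by
      have h := hOm ((1 : ℝ), (0 : ℝ), (0 : Fin n → ℝ), (0 : Fin n → ℝ))
        (by rw [fderiv_cst_apply hH]; simp [Prod.mk_zero_zero])
      simpa [OmTilde] using h
    refine ⟨hP, ?_⟩
    have hq : ∀ k, v.2.2.1 k = v.1 * (D (0, Pi.single k 1)) := by
      intro k
      have h := hOm ((0 : ℝ), -(D ((0 : Fin n → ℝ), Pi.single k 1)),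
          (0 : Fin n → ℝ), Pi.single k (1 : ℝ))
        (by rw [fderiv_cst_apply hH]; simp [hD])
      simp only [OmTilde, mul_zero, zero_sub, mul_neg, Pi.single_apply, mul_ite, mul_one,
        mul_zero, neg_neg, zero_mul, sub_zero, zero_add] at h
      rw [Finset.sum_sub_distrib] at h
      simp [Finset.sum_ite_eq'] at h
      linarith
    have hp : ∀ k, v.2.2.2 k = -(v.1 * (D (Pi.single k 1, 0))) := by
      intro k
      have h := hOm ((0 : ℝ), -(D (Pi.single k (1 : ℝ), (0 : Fin n → ℝ))),
          Pi.single k (1 : ℝ), (0 : Fin n → ℝ))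
        (by rw [fderiv_cst_apply hH]; simp [hD])
      simp only [OmTilde, mul_zero, zero_sub, mul_neg, Pi.single_apply, mul_ite, mul_one,
        neg_neg, zero_mul, sub_zero, zero_add] at h
      rw [Finset.sum_sub_distrib] at h
      simp [Finset.sum_ite_eq'] at h
      linarith
    ext k
    · simpa [XH, Prod.smul_def, smul_eq_mul] using hq k
    · simp only [Prod.smul_def, Pi.smul_apply, smul_eq_mul, XH]
      rw [hp k]; ring
  -- projections of the derivative of c
  have hTd : ∀ u ∈ I, HasDerivAt (fun s => (c s).1) ((c' u).1) u := fun u hu =>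
    (πT n).hasFDerivAt.comp_hasDerivAt u (hderiv u hu)
  have hPd : ∀ u ∈ I, HasDerivAt (fun s => (c s).2.1) ((c' u).2.1) u := fun u hu =>
    (πP n).hasFDerivAt.comp_hasDerivAt u (hderiv u hu)
  have hZd : ∀ u ∈ I, HasDerivAt (fun s => (c s).2.2) ((c' u).2.2) u := fun u hu =>
    (πZ n).hasFDerivAt.comp_hasDerivAt u (hderiv u hu)
  -- P is constant
  have hPconst : ∀ s ∈ I, (c s).2.1 = (c 0).2.1 := by
    intro s hs
    exact eq_const_of_hasDerivAt_zero hI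
      (f := fun s => (c s).2.1)
      (fun u hu => by rw [← (key u hu).1]; exact hPd u hu) h0 hs
  -- the auxiliary curve h(s) = Φ(T(0) - T(s), z(s)) is constant
  have hcurve : ∀ u ∈ I, HasDerivAt (fun s => Φ ((c 0).1 - (c s).1, (c s).2.2))
      (0 : Phase n) u := by
    intro u hu
    have hinner : HasDerivAt (fun s => ((c 0).1 - (c s).1, (c s).2.2))
        (-(c' u).1, (c' u).2.2) u := by
      have h1 : HasDerivAt (fun s => (c 0).1 - (c s).1) (0 - (c' u).1) u :=
        (hasDerivAt_const u ((c 0).1)).sub (hTd u hu)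
      rw [zero_sub] at h1
      exact HasDerivAt.prodMk h1 (hZd u hu)
    have hdiff : DifferentiableAt ℝ Φ ((c 0).1 - (c u).1, (c u).2.2) :=
      (hΦreg.differentiable one_ne_zero) _
    have h := hdiff.hasFDerivAt.comp_hasDerivAt u hinner
    have hval : fderiv ℝ Φ ((c 0).1 - (c u).1, (c u).2.2) (-(c' u).1, (c' u).2.2)
        = 0 := by
      rw [(key u hu).2]
      have harg : ((-(c' u).1 : ℝ), (c' u).1 • XH H ((c u).2.2))
          = (c' u).1 • ((((0 : ℝ), XH H ((c u).2.2)) : ℝ × Phase n)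
              - (((1 : ℝ), (0 : Phase n)) : ℝ × Phase n)) := by
        rw [Prod.mk_sub_mk, Prod.smul_mk]
        simp [Prod.smul_def]
      rw [harg, map_smul, map_sub,
        fderiv_flow_XH hH hΦreg hΦ0 hΦ' ((c 0).1 - (c u).1) ((c u).2.2),
        fderiv_flow_time hΦreg hΦ' ((c 0).1 - (c u).1) ((c u).2.2),
        sub_self, smul_zero]
    rwa [hval] at h
  have hconst : ∀ s ∈ I, Φ ((c 0).1 - (c s).1, (c s).2.2) = (c 0).2.2 := by
    intro s hs
    have := eq_const_of_hasDerivAt_zero hI hcurve h0 hs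
    rw [this, sub_self, hΦ0]
  intro s hs
  refine ⟨hPconst s hs, ?_⟩
  have hz : (c s).2.2 = Φ ((c s).1 - (c 0).1, (c 0).2.2) := by
    calc (c s).2.2 = Φ (0, (c s).2.2) := (hΦ0 _).symm
      _ = Φ (((c s).1 - (c 0).1) + ((c 0).1 - (c s).1), (c s).2.2) := by ring_nf
      _ = Φ ((c s).1 - (c 0).1, Φ ((c 0).1 - (c s).1, (c s).2.2)) :=
          flow_add hH hΦreg hΦ0 hΦ' _ _ _
      _ = Φ ((c s).1 - (c 0).1, (c 0).2.2) := by rw [hconst s hs]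
  exact hz
end
end

section
/- Fix n ≥ 1, a smooth H : ℝ^n × ℝ^n → ℝ whose Hamiltonian vector field X_H(q,p) = (∂H/∂p, −∂H/∂q) has a global C¹ flow Φ, a time t ∈ ℝ, and a function f : ℝ^n × ℝ^n → ℝ. Define the perennial O_f^t : ℝ × ℝ × ℝ^n × ℝ^n → ℝ by O_f^t(T,P,q,p) = f(Φ(t − T, (q,p))). Then: (i) O_f^t is constant along every C¹ curve c in Γ with velocities in the longitudinal spaces L_{c(s)}, i.e. O_f^t ∘ c is constant; and (ii) on the time level Γ_t = {x ∈ Γ : T(x) = t}, O_f^t coincides with f evaluated on the (q,p)-coordinates: O_f^t(t,P,q,p) = f(q,p). (These are the perennials defined by their initial data on the global transversal surface Γ_t — Bergmann's canonical constants of motion of Hamilton–Jacobi theory.) -/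
noncomputable section

/-- The perennial `O_f^t(T,P,q,p) = f(Φ(t − T, (q,p)))` defined by its initial
datum `f` on the time level `Γ_t`. -/
def perennialOf {n : ℕ} (Φ : ℝ × Phase n → Phase n) (t : ℝ) (f : Phase n → ℝ)
    (x : ExtPhase n) : ℝ :=
  f (Φ (t - x.1, (x.2.2.1, x.2.2.2)))

open Set

/-- Global uniqueness of integral curves of a locally Lipschitz vector field. -/
lemma ode_unique_global {E : Type*} [NormedAddCommGroup E] [NormedSpace ℝ E]
    {X : E → E} (hX : ∀ x : E, ∃ K : NNReal, ∃ u ∈ nhds x, LipschitzOnWith K X u)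
    {f g : ℝ → E} (hf : ∀ s, HasDerivAt f (X (f s)) s)
    (hg : ∀ s, HasDerivAt g (X (g s)) s) (h0 : f 0 = g 0) : f = g := by
  have hfc : Continuous f := continuous_iff_continuousAt.mpr fun s => (hf s).continuousAt
  have hgc : Continuous g := continuous_iff_continuousAt.mpr fun s => (hg s).continuousAt
  have hS : IsClopen {a : ℝ | f a = g a} := by
    constructor
    · exact isClosed_eq hfc hgc
    · rw [isOpen_iff_mem_nhds]
      intro a₀ (ha₀ : f a₀ = g a₀)
      obtain ⟨K, u, hu, hLip⟩ := hX (f a₀)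
      have hmem : (f ⁻¹' u ∩ g ⁻¹' u) ∈ nhds a₀ := by
        apply Filter.inter_mem
        · exact hfc.continuousAt.preimage_mem_nhds hu
        · exact hgc.continuousAt.preimage_mem_nhds (ha₀ ▸ hu)
      obtain ⟨ε, hε, hball⟩ := Metric.mem_nhds_iff.mp hmem
      have hIoo : Set.Ioo (a₀ - ε) (a₀ + ε) ⊆ f ⁻¹' u ∩ g ⁻¹' u := by
        rwa [← Real.ball_eq_Ioo]
      have heq : EqOn f g (Icc (a₀ - ε) (a₀ + ε)) := by
        apply ODE_solution_unique_of_mem_Icc (v := fun _ => X) (s := fun _ => u)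
          (fun _ _ => hLip) (t₀ := a₀) ⟨by linarith, by linarith⟩
          hfc.continuousOn (fun s _ => hf s) (fun s hs => (hIoo hs).1)
          hgc.continuousOn (fun s _ => hg s) (fun s hs => (hIoo hs).2) ha₀
      have : Set.Ioo (a₀ - ε) (a₀ + ε) ⊆ {a : ℝ | f a = g a} :=
        fun s hs => heq (Ioo_subset_Icc_self hs)
      exact Filter.mem_of_superset (by rw [← Real.ball_eq_Ioo]; exact Metric.ball_mem_nhds _ hε) this
  have := hS.eq_univ (s := {a : ℝ | f a = g a}) ⟨0, h0⟩
  funext a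
  have ha : a ∈ {a : ℝ | f a = g a} := this ▸ Set.mem_univ a
  exact ha

/-- The Hamiltonian vector field of a smooth Hamiltonian is `C¹`. -/
lemma XH_contDiff {n : ℕ} {H : Phase n → ℝ} (hH : ContDiff ℝ (⊤ : ℕ∞) H) :
    ContDiff ℝ 1 (XH H) := by
  have hfd : ContDiff ℝ 1 (fderiv ℝ H) := hH.fderiv_right (by exact WithTop.coe_le_coe.mpr le_top)
  apply ContDiff.prodMk
  · exact contDiff_pi.mpr fun k => hfd.clm_apply contDiff_const
  · exact contDiff_pi.mpr fun k => (hfd.clm_apply contDiff_const).neg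

/-- The function `O_f^t(T,P,q,p) = f(Φ(t−T,(q,p)))` is (i) a
perennial: constant along every C¹ curve in `Γ` with longitudinal velocities, and
(ii) coincides on the time level `Γ_t` with `f` evaluated on the `(q,p)`-coordinates. -/
theorem perennialOf_constant_on_orbits_and_initial_datum
    (n : ℕ) (hn : 1 ≤ n) (H : Phase n → ℝ) (hH : ContDiff ℝ (⊤ : ℕ∞) H)
    (Φ : ℝ × Phase n → Phase n) (hΦreg : ContDiff ℝ 1 Φ)
    (hΦ0 : ∀ z : Phase n, Φ (0, z) = z)
    (hΦ' : ∀ (s : ℝ) (z : Phase n),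
      HasDerivAt (fun r => Φ (r, z)) (XH H (Φ (s, z))) s)
    (t : ℝ) (f : Phase n → ℝ) :
    (∀ (I : Set ℝ), I.OrdConnected →
      ∀ c c' : ℝ → ExtPhase n,
        (∀ s ∈ I, HasDerivAt c (c' s) s) →
        (∀ s ∈ I, Cst H (c s) = 0) →
        (∀ s ∈ I, fderiv ℝ (Cst H) (c s) (c' s) = 0 ∧
          ∀ w : ExtPhase n, fderiv ℝ (Cst H) (c s) w = 0 → OmTilde (c' s) w = 0) →
        ∀ s₁ ∈ I, ∀ s₂ ∈ I,
          perennialOf Φ t f (c s₁) = perennialOf Φ t f (c s₂)) ∧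
    (∀ x : ExtPhase n, Cst H x = 0 → x.1 = t →
      perennialOf Φ t f x = f (x.2.2.1, x.2.2.2)) := by
  have hXC : ContDiff ℝ 1 (XH H) := XH_contDiff hH
  -- group law for the flow
  have hgrp : ∀ (a b : ℝ) (z : Phase n), Φ (a + b, z) = Φ (a, Φ (b, z)) := by
    intro a b z
    have := ode_unique_global (X := XH H)
      (fun x => (hXC.contDiffAt (x := x)).exists_lipschitzOnWith)
      (f := fun r => Φ (r + b, z)) (g := fun r => Φ (r, Φ (b, z)))
      (fun s => (hΦ' (s + b) z).comp_add_const s b)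
      (fun s => hΦ' s (Φ (b, z)))
      (by show Φ (0 + b, z) = Φ (0, Φ (b, z)); rw [zero_add, hΦ0])
    exact congrFun this a
  -- key derivative identity : DΦ(θ,z)(-1, X_H z) = 0
  have hkey : ∀ (θ : ℝ) (z : Phase n), fderiv ℝ Φ (θ, z) ((-1 : ℝ), XH H z) = 0 := by
    intro θ z
    have hΦd : HasFDerivAt Φ (fderiv ℝ Φ (θ, z)) (θ, z) :=
      ((hΦreg.differentiable one_ne_zero) (θ, z)).hasFDerivAt
    have hinner : HasDerivAt (fun ε : ℝ => (θ - ε, Φ (ε, z))) ((-1 : ℝ), XH H z) 0 := by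
      have h1 : HasDerivAt (fun ε : ℝ => θ - ε) (-1 : ℝ) 0 := by
        simpa using (hasDerivAt_id (0 : ℝ)).const_sub θ
      have h2 : HasDerivAt (fun ε : ℝ => Φ (ε, z)) (XH H z) 0 := by
        have := hΦ' 0 z
        rwa [hΦ0] at this
      exact h1.prodMk h2
    have hcomp : HasDerivAt (fun ε : ℝ => Φ (θ - ε, Φ (ε, z)))
        (fderiv ℝ Φ (θ, z) ((-1 : ℝ), XH H z)) 0 := by
      have hΦd' : HasFDerivAt Φ (fderiv ℝ Φ (θ, z)) ((θ - (0 : ℝ)), Φ (0, z)) := by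
        rw [sub_zero, hΦ0]; exact hΦd
      exact hΦd'.comp_hasDerivAt 0 hinner
    have hconst : (fun ε : ℝ => Φ (θ - ε, Φ (ε, z))) = fun _ => Φ (θ, z) := by
      funext ε
      rw [← hgrp (θ - ε) ε z, sub_add_cancel]
    have hzero : HasDerivAt (fun ε : ℝ => Φ (θ - ε, Φ (ε, z))) 0 0 := by
      rw [hconst]; exact hasDerivAt_const 0 _
    exact hcomp.unique hzero
  -- derivative of the constraint function
  set L1 : ExtPhase n →L[ℝ] ℝ :=
    (ContinuousLinearMap.fst ℝ ℝ (Phase n)).comp (ContinuousLinearMap.snd ℝ ℝ (ℝ × Phase n))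
  set L2 : ExtPhase n →L[ℝ] Phase n :=
    (ContinuousLinearMap.snd ℝ ℝ (Phase n)).comp (ContinuousLinearMap.snd ℝ ℝ (ℝ × Phase n))
  have hCd : ∀ x : ExtPhase n,
      HasFDerivAt (Cst H) (L1 + (fderiv ℝ H x.2.2).comp L2) x := by
    intro x
    have h1 : HasFDerivAt (fun v : ExtPhase n => v.2.1) L1 x := L1.hasFDerivAt
    have h2 : HasFDerivAt (fun v : ExtPhase n => H v.2.2)
        ((fderiv ℝ H x.2.2).comp L2) x :=
      ((hH.differentiable (by simp)) x.2.2).hasFDerivAt.comp x L2.hasFDerivAt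
    exact h1.add h2
  have hCfd : ∀ (x : ExtPhase n) (w : ExtPhase n),
      fderiv ℝ (Cst H) x w = w.2.1 + fderiv ℝ H x.2.2 w.2.2 := by
    intro x w
    rw [(hCd x).fderiv]
    rfl
  constructor
  · intro I hI c c' hc hcΓ hlong s₁ hs₁ s₂ hs₂
    -- longitudinal velocities are proportional to (1, 0, X_H)
    have hvel : ∀ s ∈ I, (c' s).2.2 = (c' s).1 • XH H ((c s).2.2) := by
      intro s hs
      obtain ⟨-, hL⟩ := hlong s hs
      have hq : ∀ k, (c' s).2.2.1 k = (c' s).1 * fderiv ℝ H ((c s).2.2) (0, Pi.single k 1) := by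
        intro k
        have hw : fderiv ℝ (Cst H) (c s)
            ((0 : ℝ), -fderiv ℝ H ((c s).2.2) ((0 : Fin n → ℝ), Pi.single k 1),
              (0 : Fin n → ℝ), Pi.single k 1) = 0 := by
          rw [hCfd]; simp
        have := hL _ hw
        simp [OmTilde, Pi.single_apply, mul_ite, Finset.sum_sub_distrib,
          Finset.sum_ite_eq'] at this
        linarith [this]
      have hp : ∀ k, (c' s).2.2.2 k = (c' s).1 * -fderiv ℝ H ((c s).2.2) (Pi.single k 1, 0) := by
        intro k
        have hw : fderiv ℝ (Cst H) (c s)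
            ((0 : ℝ), -fderiv ℝ H ((c s).2.2) (Pi.single k 1, (0 : Fin n → ℝ)),
              Pi.single k 1, (0 : Fin n → ℝ)) = 0 := by
          rw [hCfd]; simp
        have := hL _ hw
        simp [OmTilde, Pi.single_apply, mul_ite, Finset.sum_sub_distrib,
          Finset.sum_ite_eq'] at this
        linarith [this]
      ext k
      · simpa [XH] using hq k
      · simpa [XH] using hp k
    -- the quantity along the curve is constant
    set y : ℝ → Phase n := fun s => Φ (t - (c s).1, (c s).2.2) with hy
    have hy0 : ∀ s ∈ I, HasDerivAt y 0 s := by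
      intro s hs
      have hc1 : HasDerivAt (fun s => (c s).1) (c' s).1 s :=
        (ContinuousLinearMap.fst ℝ ℝ (ℝ × Phase n)).hasFDerivAt.comp_hasDerivAt s (hc s hs)
      have hc2 : HasDerivAt (fun s => (c s).2.2) (c' s).2.2 s :=
        L2.hasFDerivAt.comp_hasDerivAt s (hc s hs)
      have hG : HasDerivAt (fun s => (t - (c s).1, (c s).2.2))
          ((-(c' s).1, (c' s).2.2)) s := (hc1.const_sub t).prodMk hc2
      have hΦd : HasFDerivAt Φ (fderiv ℝ Φ (t - (c s).1, (c s).2.2)) (t - (c s).1, (c s).2.2) :=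
        ((hΦreg.differentiable one_ne_zero) _).hasFDerivAt
      have hcomp : HasDerivAt y (fderiv ℝ Φ (t - (c s).1, (c s).2.2)
          ((-(c' s).1, (c' s).2.2))) s := hΦd.comp_hasDerivAt s hG
      have hvec : ((-(c' s).1, (c' s).2.2) : ℝ × Phase n)
          = (c' s).1 • ((-1 : ℝ), XH H ((c s).2.2)) := by
        simp [hvel s hs, Prod.ext_iff]
      rw [hvec, ContinuousLinearMap.map_smul, hkey] at hcomp
      simpa using hcomp
    have hnorm : ‖y s₂ - y s₁‖ ≤ 0 * ‖s₂ - s₁‖ := by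
      apply (hI.convex (𝕜 := ℝ)).norm_image_sub_le_of_norm_hasDerivWithin_le
        (f' := fun _ => (0 : Phase n)) (fun x hx => (hy0 x hx).hasDerivWithinAt)
        (fun x _ => by simp) hs₁ hs₂
    have hyy : y s₁ = y s₂ := by
      have : ‖y s₂ - y s₁‖ ≤ 0 := by simpa using hnorm
      have := norm_le_zero_iff.mp this
      exact (sub_eq_zero.mp this).symm
    exact congrArg f hyy
  · intro x hC hT
    show f (Φ (t - x.1, (x.2.2.1, x.2.2.2))) = f (x.2.2.1, x.2.2.2)
    rw [hT, sub_self, hΦ0]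
end
end

section
/- Fix n ≥ 1, a smooth H : ℝ^n × ℝ^n → ℝ whose Hamiltonian vector field X_H(q,p) = (∂H/∂p, −∂H/∂q) has a global C¹ flow Φ, and a time t ∈ ℝ. For a function f : ℝ^n × ℝ^n → ℝ let O_f^t(T,P,q,p) = f(Φ(t − T, (q,p))). Let x_1 = (T_1,P_1,q_1,p_1) and x_2 = (T_2,P_2,q_2,p_2) be two points of the constraint surface Γ. If O_f^t(x_1) = O_f^t(x_2) for every coordinate function f among q^1,…,q^n, p_1,…,p_n, then x_1 and x_2 lie on the same dynamical trajectory: (q_2,p_2) = Φ(T_2 − T_1, (q_1,p_1)) and P_1 = P_2. (The perennials Q_t^k = O_{q^k}^t and P_{tk} = O_{p_k}^t thus form a complete system of perennials: they separate c-orbits.) -/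
noncomputable section

/-- A continuous linear functional on phase space is determined by its values on
the standard basis vectors. -/
lemma cl_apply_decomp {n : ℕ} (L : Phase n →L[ℝ] ℝ) (v : Phase n) :
    L v = ∑ k, v.1 k * L ((Pi.single k 1 : Fin n → ℝ), 0)
        + ∑ k, v.2 k * L (0, (Pi.single k 1 : Fin n → ℝ)) := by
  have hv : v = (∑ k, v.1 k • (((Pi.single k 1 : Fin n → ℝ), (0 : Fin n → ℝ)) : Phase n))
      + ∑ k, v.2 k • (((0 : Fin n → ℝ), (Pi.single k 1 : Fin n → ℝ)) : Phase n) := by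
    apply Prod.ext <;>
    · simp only [Prod.fst_add, Prod.snd_add, Prod.fst_sum, Prod.snd_sum, Prod.smul_mk,
        smul_zero, Finset.sum_const_zero, add_zero, zero_add]
      funext j
      simp [Finset.sum_apply, Pi.single_apply, Finset.sum_ite_eq]
  conv_lhs => rw [hv]
  simp only [map_add, map_sum]
  refine congrArg₂ (· + ·) ?_ ?_ <;>
    refine Finset.sum_congr rfl fun k _ => ?_ <;>
    rw [map_smul, smul_eq_mul]

/-- The differential of `H` annihilates the Hamiltonian vector field. -/
lemma dH_XH_eq_zero {n : ℕ} (H : Phase n → ℝ) (hH : Differentiable ℝ H) (w : Phase n) :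
    fderiv ℝ H w (XH H w) = 0 := by
  rw [cl_apply_decomp]
  rw [← Finset.sum_add_distrib]
  refine Finset.sum_eq_zero fun k _ => ?_
  simp only [XH]
  ring

/-- `H` is conserved along the flow. -/
lemma H_conserved {n : ℕ} (H : Phase n → ℝ) (hH : Differentiable ℝ H)
    (Φ : ℝ × Phase n → Phase n)
    (hΦ0 : ∀ z : Phase n, Φ (0, z) = z)
    (hΦ' : ∀ (s : ℝ) (z : Phase n),
      HasDerivAt (fun r => Φ (r, z)) (XH H (Φ (s, z))) s)
    (s : ℝ) (z : Phase n) : H (Φ (s, z)) = H z := by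
  have hd : ∀ r : ℝ, HasDerivAt (fun r => H (Φ (r, z))) 0 r := by
    intro r
    have := (hH (Φ (r, z))).hasFDerivAt.comp_hasDerivAt r (hΦ' r z)
    rwa [dH_XH_eq_zero H hH] at this
  have := is_const_of_deriv_eq_zero (f := fun r => H (Φ (r, z)))
    (fun r => (hd r).differentiableAt) (fun r => (hd r).deriv) s 0
  simpa [hΦ0 z] using this

/-- The perennials `Q_t^k = O_{q^k}^t` and `P_{tk} = O_{p_k}^t`
form a complete system: if two points of the constraint surface `Γ` give the same
values to all of them, they lie on the same dynamical trajectory. -/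
theorem coordinate_perennials_separate_orbits
    (n : ℕ) (hn : 1 ≤ n) (H : Phase n → ℝ) (hH : ContDiff ℝ (⊤ : ℕ∞) H)
    (Φ : ℝ × Phase n → Phase n) (hΦreg : ContDiff ℝ 1 Φ)
    (hΦ0 : ∀ z : Phase n, Φ (0, z) = z)
    (hΦ' : ∀ (s : ℝ) (z : Phase n),
      HasDerivAt (fun r => Φ (r, z)) (XH H (Φ (s, z))) s)
    (hΦgrp : ∀ (s r : ℝ) (z : Phase n), Φ (s, Φ (r, z)) = Φ (s + r, z))
    (t : ℝ) (x₁ x₂ : ExtPhase n)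
    (hx₁ : Cst H x₁ = 0) (hx₂ : Cst H x₂ = 0)
    (hq : ∀ k : Fin n,
      perennialOf Φ t (fun z => z.1 k) x₁ = perennialOf Φ t (fun z => z.1 k) x₂)
    (hp : ∀ k : Fin n,
      perennialOf Φ t (fun z => z.2 k) x₁ = perennialOf Φ t (fun z => z.2 k) x₂) :
    (x₂.2.2.1, x₂.2.2.2) = Φ (x₂.1 - x₁.1, (x₁.2.2.1, x₁.2.2.2)) ∧
      x₁.2.1 = x₂.2.1 := by
  set z₁ : Phase n := (x₁.2.2.1, x₁.2.2.2) with hz₁def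
  set z₂ : Phase n := (x₂.2.2.1, x₂.2.2.2) with hz₂def
  simp only [perennialOf] at hq hp
  have hΦeq : Φ (t - x₁.1, z₁) = Φ (t - x₂.1, z₂) :=
    Prod.ext (funext hq) (funext hp)
  have hz₂ : z₂ = Φ (x₂.1 - x₁.1, z₁) := by
    have h1 : Φ (x₂.1 - t, Φ (t - x₂.1, z₂)) = z₂ := by
      rw [hΦgrp]
      have : x₂.1 - t + (t - x₂.1) = 0 := by ring
      rw [this, hΦ0]
    have h2 : x₂.1 - t + (t - x₁.1) = x₂.1 - x₁.1 := by ring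
    rw [← h1, ← hΦeq, hΦgrp, h2]
  refine ⟨hz₂, ?_⟩
  have hdiff : Differentiable ℝ H := hH.differentiable (by simp)
  have hHz : H z₂ = H z₁ := by
    rw [hz₂, H_conserved H hdiff Φ hΦ0 hΦ']
  simp only [Cst] at hx₁ hx₂
  rw [← hz₁def] at hx₁
  rw [← hz₂def] at hx₂
  linarith
end
end
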